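/- Let K > 0, let (ξ(t))_{t≥0} be i.i.d. random variables with values in (0,1) such that log₂ ξ(t) ∈ ℤ almost surely, let log₂ N(0) ∈ ℤ, and define N(t+1) = 2N(t) if N(t) < K and N(t+1) = ξ(t)N(t) if N(t) ≥ K. If E[log₂ ξ(1)] = −∞, then N(t) → 0 in probability, i.e. for every x ∈ ℤ, lim_{t→∞} P(log₂ N(t) > x) = 0; nevertheless P( lim_{t→∞} N(t) = 0 ) = 0. -/

import Mathlib

/-!
Write `ℓ(t) = log₂ N(t)`, `θ = ⌈log₂ K⌉` and `s(t) = ⌈-log₂ ξ(t)⌉ ≥ 1`, so that `ℓ` climbs by one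
below `θ` and drops by `s(t)` at or above it. Once `ℓ ≤ θ`, which holds after `(ℓ(0) - θ)⁺` steps,
every crash starts from `θ` itself and the next one comes exactly `1 + s` steps later: the crash
times form a delayed renewal process whose inter-arrival time `1 + s` has infinite mean. By the
Erdős–Feller–Pollard argument the probability of a crash at time `n` tends to `0`, and since
`ℓ(t) > x` forces a crash within `θ - x` steps, `P(ℓ(t) > x) → 0`. On the other hand `N` doubles
whenever `N < K`, so no path tends to `0`.
-/

open MeasureTheory ProbabilityTheory Filter Set Topology
open scoped ENNReal

namespace CrashModel

/-- `level θ l₀ s t` is `log₂ N(t)` for `N(0) = 2 ^ l₀`, threshold level `θ = ⌈log₂ K⌉` and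
crash sizes `s t = -log₂ ξ(t)`. -/
def level (θ l₀ : ℤ) (s : ℕ → ℕ) : ℕ → ℤ
  | 0 => l₀
  | t + 1 => if level θ l₀ s t < θ then level θ l₀ s t + 1 else level θ l₀ s t - s t

section Level

variable {θ l₀ : ℤ} {s : ℕ → ℕ}

theorem level_succ_of_lt {t : ℕ} (h : level θ l₀ s t < θ) :
    level θ l₀ s (t + 1) = level θ l₀ s t + 1 :=
  if_pos h

theorem level_succ_of_le {t : ℕ} (h : θ ≤ level θ l₀ s t) :
    level θ l₀ s (t + 1) = level θ l₀ s t - s t :=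
  if_neg h.not_gt

theorem level_congr {s' : ℕ → ℕ} {n : ℕ} (h : ∀ t < n, s t = s' t) :
    level θ l₀ s n = level θ l₀ s' n := by
  induction n with
  | zero => rfl
  | succ n ih => simp only [level, ih fun t ht => h t (by omega), h n n.lt_succ_self]

theorem level_add_of_le {r d : ℕ} (h : level θ l₀ s r + d ≤ θ) :
    level θ l₀ s (r + d) = level θ l₀ s r + d := by
  induction d with
  | zero => simp
  | succ d ih =>
    have ih := ih (by omega)
    rw [← add_assoc, level_succ_of_lt (by omega), ih]
    push_cast
    ring

theorem level_le_of_toNat_le (hs : ∀ t, 0 < s t) {t : ℕ} (ht : (l₀ - θ).toNat ≤ t) :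
    level θ l₀ s t ≤ θ := by
  have key : ∀ t : ℕ, level θ l₀ s t ≤ max (l₀ - t) θ := by
    intro t
    induction t with
    | zero => simp [level]
    | succ t ih =>
      have := hs t
      unfold level
      split_ifs <;> omega
  have := key t
  omega

theorem level_add_of_crash (hs : ∀ t, 0 < s t) {j d : ℕ} (hj : (l₀ - θ).toNat ≤ j)
    (hc : θ ≤ level θ l₀ s j) (hd : d ≤ s j) :
    level θ l₀ s (j + 1 + d) = θ - s j + d := by
  have hθ : level θ l₀ s j = θ := (level_le_of_toNat_le hs hj).antisymm hc
  have h₁ : level θ l₀ s (j + 1) = θ - s j := by rw [level_succ_of_le hc, hθ]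
  rw [level_add_of_le (by omega), h₁]

theorem level_lt_of_crash (hs : ∀ t, 0 < s t) {j d : ℕ} (hj : (l₀ - θ).toNat ≤ j)
    (hc : θ ≤ level θ l₀ s j) (hd₀ : 0 < d) (hd : d ≤ s j) :
    level θ l₀ s (j + d) < θ := by
  obtain ⟨d, rfl⟩ : ∃ d', d = 1 + d' := ⟨d - 1, by omega⟩
  rw [← add_assoc, level_add_of_crash hs hj hc (by omega)]
  omega

theorem le_level_of_crash (hs : ∀ t, 0 < s t) {j : ℕ} (hj : (l₀ - θ).toNat ≤ j)
    (hc : θ ≤ level θ l₀ s j) : θ ≤ level θ l₀ s (j + 1 + s j) := by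
  rw [level_add_of_crash hs hj hc le_rfl]
  omega

theorem exists_last_crash (hs : ∀ t, 0 < s t) {j n : ℕ} (hj : (l₀ - θ).toNat ≤ j) (hjn : j < n)
    (hcj : θ ≤ level θ l₀ s j) (hcn : θ ≤ level θ l₀ s n) :
    ∃ i < n - (l₀ - θ).toNat, θ ≤ level θ l₀ s (n - 1 - i) ∧ s (n - 1 - i) = i := by
  induction hd : n - j using Nat.strong_induction_on generalizing j with
  | _ d ih =>
    rcases lt_trichotomy (j + 1 + s j) n with hlt | heq | hgt
    · exact ih (n - (j + 1 + s j)) (by omega) (by omega) hlt (le_level_of_crash hs hj hcj) rfl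
    · refine ⟨n - 1 - j, by omega, ?_⟩
      rw [show n - 1 - (n - 1 - j) = j by omega]
      exact ⟨hcj, by omega⟩
    · have := level_lt_of_crash hs hj hcj (d := n - j) (by omega) (by omega)
      rw [show j + (n - j) = n by omega] at this
      omega

theorem exists_crash_of_lt_level {t : ℕ} (hs : ∀ t, 0 < s t) (ht : (l₀ - θ).toNat ≤ t) {x : ℤ}
    (hx : x < level θ l₀ s t) : ∃ i : ℕ, (i : ℤ) < θ - x ∧ θ ≤ level θ l₀ s (t + i) := by
  have := level_le_of_toNat_le hs ht
  refine ⟨(θ - level θ l₀ s t).toNat, by omega, ?_⟩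
  rw [level_add_of_le (by omega)]
  omega

end Level

section Renewal

theorem _root_.Antitone.summable_of_summable_comp_mul {F : ℕ → ℝ} (hF : Antitone F) {m : ℕ}
    [NeZero m] (h : Summable fun c => F (m * c)) : Summable F :=
  (summable_indicator_mod_iff hF ((0 : ℕ) : ZMod m)).1 <|
    (summable_indicator_mod_iff_summable m 0 F).2 (by simpa using h)

theorem sum_range_comp_mul_le_sum_range {g : ℕ → ℝ} (hg : ∀ i, 0 ≤ g i) {m M n : ℕ} (hm : 0 < m)
    (hn : m * M ≤ n) : ∑ c ∈ Finset.range M, g (m * c) ≤ ∑ i ∈ Finset.range n, g i := by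
  rw [← Finset.sum_image fun a _ b _ hab => Nat.eq_of_mul_eq_mul_left hm hab]
  refine Finset.sum_le_sum_of_subset_of_nonneg (fun i hi => ?_) fun i _ _ => hg i
  obtain ⟨c, hc, rfl⟩ := Finset.mem_image.1 hi
  exact Finset.mem_range.2 ((Nat.mul_lt_mul_left hm).2 (Finset.mem_range.1 hc) |>.trans_le hn)

theorem exists_strictMono_tendsto_sub {u : ℕ → ℝ} (hu : ∀ n, u n ∈ Icc (0 : ℝ) 1) :
    ∃ σ : ℕ → ℕ, StrictMono σ ∧ ∃ v : ℕ → ℝ, v 0 = limsup u atTop ∧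
      ∀ j, v j ∈ Icc 0 (limsup u atTop) ∧ Tendsto (fun k => u (σ k - j)) atTop (𝓝 (v j)) := by
  have hbdd : IsBoundedUnder (· ≤ ·) atTop u := isBoundedUnder_of ⟨1, fun n => (hu n).2⟩
  have hcobdd : IsCoboundedUnder (· ≤ ·) atTop u :=
    (isBoundedUnder_of ⟨0, fun n => (hu n).1⟩).isCoboundedUnder_le
  obtain ⟨φ, hφ, hφu⟩ := (MapClusterPt.limsup hcobdd hbdd).tendsto_subseq
  obtain ⟨v, hv, ψ, hψ, hψv⟩ := (isCompact_univ_pi fun _ : ℕ => isCompact_Icc).tendsto_subseq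
    (x := fun k j => u (φ k - j)) fun k j _ => hu _
  have hlim : ∀ j, Tendsto (fun k => u (φ (ψ k) - j)) atTop (𝓝 (v j)) :=
    fun j => tendsto_pi_nhds.1 hψv j
  have hlim₀ : Tendsto (fun k => u (φ (ψ k))) atTop (𝓝 (limsup u atTop)) :=
    hφu.comp hψ.tendsto_atTop
  refine ⟨φ ∘ ψ, hφ.comp hψ, v, tendsto_nhds_unique (by simpa using hlim 0) hlim₀,
    fun j => ⟨⟨(hv j trivial).1, ?_⟩, hlim j⟩⟩
  have hsub : Tendsto (fun k => φ (ψ k) - j) atTop atTop :=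
    tendsto_sub_atTop_nat j |>.comp ((hφ.comp hψ).tendsto_atTop)
  exact ((hlim j).mapClusterPt.of_comp hsub).le_limsup hbdd

variable {u f e : ℕ → ℝ} (T₀ : ℕ)

theorem eq_tsum_of_renewal (hf₀ : ∀ i, 0 ≤ f i) (hf : Summable f) (hu : ∀ n, u n ∈ Icc (0 : ℝ) 1)
    (he : Tendsto e atTop (𝓝 0))
    (hren : ∀ n, T₀ ≤ n → u n = e n + ∑ i ∈ Finset.range (n - T₀), u (n - 1 - i) * f i)
    {φ : ℕ → ℕ} (hφ : Tendsto φ atTop atTop) {x : ℝ} {w : ℕ → ℝ}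
    (hx : Tendsto (fun k => u (φ k)) atTop (𝓝 x))
    (hw : ∀ i, Tendsto (fun k => u (φ k - 1 - i)) atTop (𝓝 (w i))) :
    x = ∑' i, w i * f i := by
  set g : ℕ → ℕ → ℝ := fun k =>
    (Finset.range (φ k - T₀) : Set ℕ).indicator fun i => u (φ k - 1 - i) * f i
  have hx' : Tendsto (fun k => ∑' i, g k i) atTop (𝓝 x) := by
    have := hx.sub (he.comp hφ)
    rw [sub_zero] at this
    refine this.congr' ?_
    filter_upwards [hφ.eventually_ge_atTop T₀] with k hk
    rw [Function.comp_apply, hren _ hk, ← sum_eq_tsum_indicator]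
    ring
  refine tendsto_nhds_unique hx' (tendsto_tsum_of_dominated_convergence hf (fun i => ?_) ?_)
  · refine ((hw i).mul_const (f i)).congr' ?_
    filter_upwards [hφ.eventually_gt_atTop (T₀ + i)] with k hk
    simp only [g]
    rw [Set.indicator_of_mem (by simp only [Finset.coe_range, mem_Iio]; omega)]
  · refine Eventually.of_forall fun k i => ?_
    simp only [g]
    by_cases hi : i ∈ (Finset.range (φ k - T₀) : Set ℕ)
    · rw [Set.indicator_of_mem hi, Real.norm_eq_abs, abs_of_nonneg (mul_nonneg (hu _).1 (hf₀ i))]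
      exact mul_le_of_le_one_left (hf₀ i) (hu _).2
    · rw [Set.indicator_of_notMem hi, norm_zero]
      exact hf₀ i

theorem eq_of_tsum_mul_eq {w : ℕ → ℝ} {β : ℝ} (hf₀ : ∀ i, 0 ≤ f i) (hf : HasSum f 1)
    (hw : ∀ i, w i ∈ Icc 0 β) (hβ : β = ∑' i, w i * f i) {a : ℕ} (ha : 0 < f a) : w a = β := by
  have hfw : Summable fun i => w i * f i :=
    (hf.summable.mul_left β).of_nonneg_of_le (fun i => mul_nonneg (hw i).1 (hf₀ i))
      fun i => mul_le_mul_of_nonneg_right (hw i).2 (hf₀ i)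
  have hzero : HasSum (fun i => (β - w i) * f i) 0 := by
    have := (hf.mul_left β).sub hfw.hasSum
    rw [mul_one, ← hβ, sub_self] at this
    simpa only [sub_mul] using this
  have := congr_fun ((hasSum_zero_iff_of_nonneg fun i =>
    mul_nonneg (sub_nonneg.2 (hw i).2) (hf₀ i)).1 hzero) a
  rcases mul_eq_zero.1 this with h | h
  · linarith
  · exact absurd h ha.ne'

/-- The Erdős–Feller–Pollard theorem for a delayed renewal sequence whose inter-arrival law `f`
has infinite mean; `F` plays the role of the tail `i ↦ f (i, ∞)`. If `β = limsup u > 0`, a limit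
`v` of backward shifts of `u` is `f`-harmonic with maximum `β` at `0`, hence equal to `β` along the
multiples of `a + 1` for an atom `a` of `f`, and then `hlast` bounds `∑ c, F ((a + 1) * c)` by
`1 / β`. -/
theorem tendsto_zero_of_renewal {F : ℕ → ℝ} (hf₀ : ∀ i, 0 ≤ f i) (hf : HasSum f 1)
    (hu : ∀ n, u n ∈ Icc (0 : ℝ) 1) (he : Tendsto e atTop (𝓝 0))
    (hren : ∀ n, T₀ ≤ n → u n = e n + ∑ i ∈ Finset.range (n - T₀), u (n - 1 - i) * f i)
    (hF₀ : ∀ i, 0 ≤ F i) (hF : Antitone F) (hFdiv : ¬ Summable F)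
    (hlast : ∀ n, ∑ i ∈ Finset.range (n - T₀), u (n - 1 - i) * F i ≤ 1) :
    Tendsto u atTop (𝓝 0) := by
  set β := limsup u atTop
  by_cases hβ : β ≤ 0
  · refine tendsto_order.2 ⟨fun a ha => Eventually.of_forall fun n => ha.trans_le (hu n).1,
      fun a ha => eventually_lt_of_limsup_lt (hβ.trans_lt ha)
        (isBoundedUnder_of ⟨1, fun n => (hu n).2⟩)⟩
  replace hβ := not_le.1 hβ
  obtain ⟨σ, hσ, v, hv₀, hv⟩ := exists_strictMono_tendsto_sub hu
  have hσsub : ∀ j, Tendsto (fun k => σ k - j) atTop atTop :=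
    fun j => (tendsto_sub_atTop_nat j).comp hσ.tendsto_atTop
  have hharm : ∀ j, v j = ∑' i, v (j + 1 + i) * f i := fun j =>
    eq_tsum_of_renewal T₀ hf₀ hf.summable hu he hren (hσsub j) (hv j).2 fun i => by
      simpa only [Nat.sub_sub, add_assoc] using (hv (j + 1 + i)).2
  obtain ⟨a, ha⟩ : ∃ a, 0 < f a := by
    by_contra! h
    have : f = 0 := funext fun i => (h i).antisymm (hf₀ i)
    rw [this] at hf
    exact one_ne_zero (hf.unique hasSum_zero)
  have hlattice : ∀ c, v ((a + 1) * c) = β := by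
    intro c
    induction c with
    | zero => simpa using hv₀
    | succ c ih =>
      rw [show (a + 1) * (c + 1) = (a + 1) * c + 1 + a by ring]
      exact eq_of_tsum_mul_eq hf₀ hf (fun i => (hv _).1) (ih.symm.trans (hharm _)) ha
  have hbound : ∀ M, ∑ c ∈ Finset.range M, F ((a + 1) * c) ≤ 1 / β := by
    intro M
    have hlim : Tendsto (fun k => ∑ c ∈ Finset.range M, u (σ k - (a + 1) * c) * F ((a + 1) * c))
        atTop (𝓝 (∑ c ∈ Finset.range M, β * F ((a + 1) * c))) :=
      tendsto_finsetSum _ fun c _ => hlattice c ▸ ((hv _).2.mul_const _)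
    have hle : ∀ᶠ k in atTop,
        ∑ c ∈ Finset.range M, u (σ k - (a + 1) * c) * F ((a + 1) * c) ≤ 1 := by
      filter_upwards [hσ.tendsto_atTop.eventually_ge_atTop (T₀ + (a + 1) * M)] with k hk
      refine le_trans ?_ (hlast (σ k + 1))
      simpa using sum_range_comp_mul_le_sum_range (g := fun i => u (σ k - i) * F i)
        (fun i => mul_nonneg (hu _).1 (hF₀ i)) (m := a + 1) (n := σ k + 1 - T₀) (by omega)
        (by omega)
    rw [← Finset.mul_sum] at hlim
    rw [le_div_iff₀' hβ]
    exact le_of_tendsto hlim hle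
  exact (hFdiv (hF.summable_of_summable_comp_mul (m := a + 1)
    (summable_of_sum_range_le (fun c => hF₀ _) hbound))).elim

end Renewal

section Crashes

variable {Ω : Type*} {s : ℕ → Ω → ℕ} {θ l₀ : ℤ}

def crashSet (θ l₀ : ℤ) (s : ℕ → Ω → ℕ) (n : ℕ) : Set Ω :=
  {ω | θ ≤ level θ l₀ (s · ω) n}

theorem pairwiseDisjoint_crashSet_inter_preimage_Ici (hs : ∀ t ω, 0 < s t ω) (n : ℕ) :
    (Finset.range (n - (l₀ - θ).toNat) : Set ℕ).PairwiseDisjoint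
      fun i => crashSet θ l₀ s (n - 1 - i) ∩ s (n - 1 - i) ⁻¹' Ici i := by
  have key : ∀ i i', i < i' → i' < n - (l₀ - θ).toNat → ∀ ω, ω ∈ crashSet θ l₀ s (n - 1 - i) →
      ω ∉ crashSet θ l₀ s (n - 1 - i') ∩ s (n - 1 - i') ⁻¹' Ici i' := by
    rintro i i' hii' hi' ω hω ⟨hω', hs'⟩
    have := level_lt_of_crash (hs · ω) (by omega) hω' (d := i' - i) (by omega) (by
      simp only [mem_preimage, mem_Ici] at hs'; omega)
    rw [show n - 1 - i' + (i' - i) = n - 1 - i by omega] at this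
    exact this.not_ge hω
  refine (pairwiseDisjoint_iff).2 fun i hi i' hi' ⟨ω, hω, hω'⟩ => ?_
  simp only [Finset.coe_range, mem_Iio] at hi hi'
  rcases lt_trichotomy i i' with h | h | h
  · exact (key i i' h hi' ω hω.1 hω').elim
  · exact h
  · exact (key i' i h hi ω hω'.1 hω).elim

theorem crashSet_eq_preimage (n : ℕ) :
    crashSet θ l₀ s n = (fun ω (i : Finset.range n) => s i ω) ⁻¹'
      {w | θ ≤ level θ l₀ (fun t => if ht : t ∈ Finset.range n then w ⟨t, ht⟩ else 0) n} := by
  ext ω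
  simp only [crashSet, mem_ofPred_eq, mem_preimage]
  rw [level_congr fun t ht => ?_]
  simp [Finset.mem_range.2 ht]

variable [MeasurableSpace Ω] {P : Measure Ω}

theorem measurableSet_crashSet (hmeas : ∀ t, Measurable (s t)) (n : ℕ) :
    MeasurableSet (crashSet θ l₀ s n) := by
  rw [crashSet_eq_preimage]
  exact measurable_pi_lambda (fun ω (i : Finset.range n) => s i ω) (fun i => hmeas i) .of_discrete

/-- Whether the process crashes at time `n` depends only on `s 0, …, s (n - 1)`. -/
theorem measure_crashSet_inter_preimage (hmeas : ∀ t, Measurable (s t)) (hind : iIndepFun s P)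
    (hident : ∀ t, IdentDistrib (s t) (s 0) P P) (n : ℕ) (B : Set ℕ) :
    P (crashSet θ l₀ s n ∩ s n ⁻¹' B) = P (crashSet θ l₀ s n) * P (s 0 ⁻¹' B) := by
  have h := indepFun_iff_measure_inter_preimage_eq_mul.1
    (hind.indepFun_finset (Finset.range n) {n} (by simp) hmeas)
    {w | θ ≤ level θ l₀ (fun t => if ht : t ∈ Finset.range n then w ⟨t, ht⟩ else 0) n}
    {w | w ⟨n, Finset.mem_singleton_self n⟩ ∈ B} .of_discrete .of_discrete
  rw [← crashSet_eq_preimage] at h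
  rw [← (hident n).measure_mem_eq .of_discrete]
  exact h

/-- The renewal equation, with the first crash after `(l₀ - θ).toNat` as the delay. -/
theorem measure_crashSet_eq (hs : ∀ t ω, 0 < s t ω) (hmeas : ∀ t, Measurable (s t))
    (hind : iIndepFun s P) (hident : ∀ t, IdentDistrib (s t) (s 0) P P) {n : ℕ}
    (hn : (l₀ - θ).toNat ≤ n) :
    P (crashSet θ l₀ s n) =
      P (crashSet θ l₀ s n \ ⋃ j ∈ Finset.Ico (l₀ - θ).toNat n, crashSet θ l₀ s j) +
      ∑ i ∈ Finset.range (n - (l₀ - θ).toNat),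
        P (crashSet θ l₀ s (n - 1 - i)) * P (s 0 ⁻¹' {i}) := by
  set T₀ := (l₀ - θ).toNat
  set A := crashSet θ l₀ s n \ ⋃ j ∈ Finset.Ico T₀ n, crashSet θ l₀ s j
  set E : ℕ → Set Ω := fun i => crashSet θ l₀ s (n - 1 - i) ∩ s (n - 1 - i) ⁻¹' {i}
  have hsplit : crashSet θ l₀ s n = A ∪ ⋃ i ∈ Finset.range (n - T₀), E i := by
    ext ω
    simp only [A, E, mem_union, Set.mem_sdiff, mem_iUnion, mem_inter_iff, mem_preimage,
      mem_singleton_iff, Finset.mem_Ico, Finset.mem_range, exists_prop]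
    constructor
    · intro hω
      by_cases hprev : ∃ j, (T₀ ≤ j ∧ j < n) ∧ ω ∈ crashSet θ l₀ s j
      · obtain ⟨j, ⟨hj, hjn⟩, hωj⟩ := hprev
        exact Or.inr (exists_last_crash (hs · ω) hj hjn hωj hω)
      · exact Or.inl ⟨hω, hprev⟩
    · rintro (⟨hω, -⟩ | ⟨i, hi, hω, hsi⟩)
      · exact hω
      · have := le_level_of_crash (hs · ω) (by omega) hω
        rwa [hsi, show n - 1 - i + 1 + i = n by omega] at this
  have hdisj : Disjoint A (⋃ i ∈ Finset.range (n - T₀), E i) := by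
    refine Set.disjoint_left.2 fun ω hω hω' => hω.2 ?_
    obtain ⟨i, hi, hωi⟩ := mem_iUnion₂.1 hω'
    exact mem_biUnion (Finset.mem_Ico.2 ⟨by simp at hi; omega, by simp at hi; omega⟩) hωi.1
  have hmeasE : ∀ i, MeasurableSet (E i) :=
    fun i => (measurableSet_crashSet hmeas _).inter (hmeas _ .of_discrete)
  rw [hsplit, measure_union hdisj (Finset.measurableSet_biUnion _ fun i _ => hmeasE i),
    measure_biUnion_finset (s := Finset.range (n - T₀))
      ((pairwiseDisjoint_crashSet_inter_preimage_Ici hs n).mono fun i =>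
        inter_subset_inter_right _ (preimage_mono (by simp))) fun i _ => hmeasE i]
  simp only [measure_crashSet_inter_preimage hmeas hind hident]

/-- The events "crash at `n - 1 - i`, no further crash before `n`" are disjoint. -/
theorem sum_measure_crashSet_mul_le_one [IsProbabilityMeasure P] (hs : ∀ t ω, 0 < s t ω)
    (hmeas : ∀ t, Measurable (s t)) (hind : iIndepFun s P)
    (hident : ∀ t, IdentDistrib (s t) (s 0) P P) (n : ℕ) :
    ∑ i ∈ Finset.range (n - (l₀ - θ).toNat),
      P (crashSet θ l₀ s (n - 1 - i)) * P (s 0 ⁻¹' Ioi i) ≤ 1 := by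
  simp only [← measure_crashSet_inter_preimage hmeas hind hident]
  rw [← measure_biUnion_finset ((pairwiseDisjoint_crashSet_inter_preimage_Ici hs n).mono fun i =>
      inter_subset_inter_right _ (preimage_mono Ioi_subset_Ici_self))
    fun i _ => (measurableSet_crashSet hmeas _).inter (hmeas _ .of_discrete)]
  exact prob_le_one

theorem tendsto_measure_crashSet_diff [IsFiniteMeasure P] (hmeas : ∀ t, Measurable (s t)) :
    Tendsto (fun n => P (crashSet θ l₀ s n \ ⋃ j ∈ Finset.Ico (l₀ - θ).toNat n, crashSet θ l₀ s j))
      atTop (𝓝 0) := by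
  set T₀ := (l₀ - θ).toNat
  set A : ℕ → Set Ω := fun n => crashSet θ l₀ s n \ ⋃ j ∈ Finset.Ico T₀ n, crashSet θ l₀ s j
  have hdisj : Pairwise (Function.onFun Disjoint fun m => A (m + T₀)) := by
    have key : ∀ m m', m < m' → Disjoint (A (m + T₀)) (A (m' + T₀)) := fun m m' h =>
      Set.disjoint_left.2 fun ω hω hω' =>
        hω'.2 (mem_biUnion (Finset.mem_Ico.2 ⟨by omega, by omega⟩) hω.1)
    intro m m' hne
    rcases lt_or_gt_of_ne hne with h | h
    · exact key m m' h
    · exact (key m' m h).symm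
  have hmeasA : ∀ m, MeasurableSet (A (m + T₀)) := fun m =>
    (measurableSet_crashSet hmeas _).diff
      (Finset.measurableSet_biUnion _ fun j _ => measurableSet_crashSet hmeas j)
  refine (tendsto_add_atTop_iff_nat T₀).1 (ENNReal.tendsto_atTop_zero_of_tsum_ne_top ?_)
  rw [← measure_iUnion hdisj hmeasA]
  exact measure_ne_top P _

theorem lintegral_natCast_eq_tsum_measure_preimage_Ioi {X : Ω → ℕ} (hX : Measurable X) :
    ∫⁻ ω, (X ω : ℝ≥0∞) ∂P = ∑' k : ℕ, P (X ⁻¹' Ioi k) := by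
  have hpt : ∀ ω, (X ω : ℝ≥0∞) = ∑' k : ℕ, (X ⁻¹' Ioi k).indicator 1 ω := by
    intro ω
    rw [tsum_eq_sum (s := Finset.range (X ω)) fun k hk => indicator_of_notMem
      (by simpa using hk) _]
    rw [Finset.sum_congr rfl fun k hk => indicator_of_mem (by simpa using hk) _]
    simp
  simp_rw [hpt]
  rw [lintegral_tsum fun k => (measurable_one.indicator (hX measurableSet_Ioi)).aemeasurable]
  exact tsum_congr fun k => lintegral_indicator_one (hX measurableSet_Ioi)

theorem tendsto_measure_crashSet [IsProbabilityMeasure P] (hs : ∀ t ω, 0 < s t ω)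
    (hmeas : ∀ t, Measurable (s t)) (hind : iIndepFun s P)
    (hident : ∀ t, IdentDistrib (s t) (s 0) P P) (hmean : ∫⁻ ω, (s 0 ω : ℝ≥0∞) ∂P = ∞) :
    Tendsto (fun n => P (crashSet θ l₀ s n)) atTop (𝓝 0) := by
  have hF : Antitone fun i : ℕ => P.real (s 0 ⁻¹' Ioi i) := fun i j hij =>
    measureReal_mono (preimage_mono (Ioi_subset_Ioi (by exact_mod_cast hij)))
  have hFdiv : ¬ Summable fun i : ℕ => P.real (s 0 ⁻¹' Ioi i) := by
    intro hsum
    rw [lintegral_natCast_eq_tsum_measure_preimage_Ioi (hmeas 0)] at hmean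
    refine ENNReal.ofReal_ne_top (r := ∑' i : ℕ, P.real (s 0 ⁻¹' Ioi i)) ?_
    rw [ENNReal.ofReal_tsum_of_nonneg (fun i => measureReal_nonneg) hsum]
    simpa only [measureReal_def, ENNReal.ofReal_toReal (measure_ne_top P _)] using hmean
  have hf : HasSum (fun i : ℕ => P.real (s 0 ⁻¹' {i})) 1 := by
    have h := tsum_measure_preimage_singleton (μ := P) (s := univ) countable_univ (f := s 0)
      fun y _ => hmeas 0 .of_discrete
    rw [preimage_univ, measure_univ, tsum_univ (f := fun i : ℕ => P (s 0 ⁻¹' {i}))] at h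
    have := ENNReal.hasSum_toReal (h.symm ▸ ENNReal.one_ne_top)
    rwa [← ENNReal.tsum_toReal_eq fun i => measure_ne_top P _, h, ENNReal.toReal_one] at this
  have hu := tendsto_zero_of_renewal (l₀ - θ).toNat (u := fun n => P.real (crashSet θ l₀ s n))
    (fun i => measureReal_nonneg) hf (fun n => ⟨measureReal_nonneg, measureReal_le_one⟩)
    ((ENNReal.tendsto_toReal ENNReal.zero_ne_top).comp
      (tendsto_measure_crashSet_diff (P := P) (θ := θ) (l₀ := l₀) hmeas))
    (fun n hn => by
      simp only [measureReal_def, Function.comp_apply]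
      rw [measure_crashSet_eq hs hmeas hind hident hn, ENNReal.toReal_add (measure_ne_top P _)
        (ENNReal.sum_ne_top.2 fun i _ => ENNReal.mul_ne_top (measure_ne_top P _)
          (measure_ne_top P _)), ENNReal.toReal_sum fun i _ => ENNReal.mul_ne_top
          (measure_ne_top P _) (measure_ne_top P _)]
      simp only [ENNReal.toReal_mul])
    (fun i => measureReal_nonneg) hF hFdiv
    (fun n => by
      have := ENNReal.toReal_mono ENNReal.one_ne_top
        (sum_measure_crashSet_mul_le_one (θ := θ) (l₀ := l₀) hs hmeas hind hident n)
      rw [ENNReal.toReal_sum fun i _ => ENNReal.mul_ne_top (measure_ne_top P _)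
          (measure_ne_top P _), ENNReal.toReal_one] at this
      simpa only [ENNReal.toReal_mul, measureReal_def] using this)
  exact (ENNReal.tendsto_toReal_iff (fun n => measure_ne_top P _) ENNReal.zero_ne_top).1 hu

theorem tendsto_measure_lt_level [IsProbabilityMeasure P] (hs : ∀ t ω, 0 < s t ω)
    (hmeas : ∀ t, Measurable (s t)) (hind : iIndepFun s P)
    (hident : ∀ t, IdentDistrib (s t) (s 0) P P) (hmean : ∫⁻ ω, (s 0 ω : ℝ≥0∞) ∂P = ∞) (x : ℤ) :
    Tendsto (fun t => P {ω | x < level θ l₀ (s · ω) t}) atTop (𝓝 0) := by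
  have hsum : Tendsto (fun t => ∑ i ∈ Finset.range (θ - x).toNat, P (crashSet θ l₀ s (t + i)))
      atTop (𝓝 0) := by
    simpa using tendsto_finsetSum (Finset.range (θ - x).toNat) fun i _ =>
      (tendsto_measure_crashSet hs hmeas hind hident hmean).comp (tendsto_add_atTop_nat i)
  refine tendsto_of_tendsto_of_tendsto_of_le_of_le' tendsto_const_nhds hsum
    (Eventually.of_forall fun _ => zero_le) ?_
  filter_upwards [eventually_ge_atTop (l₀ - θ).toNat] with t ht
  refine (measure_mono fun ω (hω : x < _) => ?_).trans (measure_biUnion_finset_le _ _)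
  obtain ⟨i, hi, hc⟩ := exists_crash_of_lt_level (hs · ω) ht hω
  exact mem_biUnion (Finset.mem_range.2 (by omega)) hc

theorem lintegral_natCeil_neg_eq_top {X : Ω → ℝ} (hX : Measurable X) (hneg : ∀ ω, X ω ≤ 0)
    (hint : ¬ Integrable X P) : ∫⁻ ω, (⌈-X ω⌉₊ : ℝ≥0∞) ∂P = ∞ := by
  by_contra hfin
  refine hint (Integrable.mono' (g := fun ω => (⌈-X ω⌉₊ : ℝ))
    ⟨(measurable_from_nat.comp (Nat.measurable_ceil.comp hX.neg)).aestronglyMeasurable, ?_⟩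
    hX.aestronglyMeasurable (ae_of_all _ fun ω => ?_))
  · simpa [HasFiniteIntegral, lt_top_iff_ne_top] using hfin
  · rw [Real.norm_eq_abs, abs_of_nonpos (hneg ω)]
    exact Nat.le_ceil _

end Crashes

section Model

theorem eq_two_zpow_level {K : ℝ} {θ l₀ : ℤ} (hθ : ∀ l : ℤ, K ≤ (2 : ℝ) ^ l ↔ θ ≤ l)
    {ξ N : ℕ → ℝ} {s : ℕ → ℕ} (hξ : ∀ t, ξ t = (2 : ℝ) ^ (-(s t : ℤ))) (hN₀ : N 0 = 2 ^ l₀)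
    (hrec : ∀ t, N (t + 1) = if N t < K then 2 * N t else ξ t * N t) (t : ℕ) :
    N t = 2 ^ level θ l₀ s t := by
  induction t with
  | zero => exact hN₀
  | succ t ih =>
    rw [hrec, ih]
    by_cases h : θ ≤ level θ l₀ s t
    · rw [if_neg (not_lt.2 ((hθ _).2 h)), level_succ_of_le h, hξ, ← zpow_add₀ two_ne_zero,
        neg_add_eq_sub]
    · rw [if_pos (lt_of_not_ge (mt (hθ _).1 h)), level_succ_of_lt (not_le.1 h),
        zpow_add_one₀ two_ne_zero, mul_comm]

theorem eq_two_zpow_neg_natCeil {x : ℝ} (hx : x ∈ Ioo (0 : ℝ) 1) {m : ℤ}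
    (hm : Real.logb 2 x = m) : x = (2 : ℝ) ^ (-(⌈-Real.logb 2 x⌉₊ : ℤ)) := by
  have hm₀ : m < 0 := by exact_mod_cast hm ▸ Real.logb_neg one_lt_two hx.1 hx.2
  rw [hm, show -(m : ℝ) = ((-m : ℤ) : ℝ) by push_cast; ring, Nat.ceil_intCast,
    Int.toNat_of_nonneg (by omega), neg_neg, ← Real.rpow_intCast, ← hm,
    Real.rpow_logb two_pos (by norm_num) hx.1]

theorem not_tendsto_zero_of_doubling {K : ℝ} (hK : 0 < K) {ξ N : ℕ → ℝ} (hξ : ∀ t, 0 < ξ t)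
    (hN₀ : 0 < N 0) (hrec : ∀ t, N (t + 1) = if N t < K then 2 * N t else ξ t * N t) :
    ¬ Tendsto N atTop (𝓝 0) := by
  have hpos : ∀ t, 0 < N t := by
    intro t
    induction t with
    | zero => exact hN₀
    | succ t ih =>
      rw [hrec]
      split_ifs
      · positivity
      · exact mul_pos (hξ t) ih
  intro h
  obtain ⟨T, hT⟩ := eventually_atTop.1 (h.eventually_lt_const hK)
  have hgrow : ∀ k, N T ≤ N (T + k) := by
    intro k
    induction k with
    | zero => rfl
    | succ k ih =>
      rw [← add_assoc, hrec, if_pos (hT _ (by omega))]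
      linarith [hpos (T + k)]
  exact (hpos T).not_ge (ge_of_tendsto h (eventually_atTop.2 ⟨T, fun t ht => by
    simpa [Nat.add_sub_cancel' ht] using hgrow (t - T)⟩))

variable {Ω : Type*} [MeasurableSpace Ω] {P : Measure Ω}

theorem ae_eq_two_zpow_level {K : ℝ} (hK : 0 < K) {ξ : ℕ → Ω → ℝ}
    (hval : ∀ t ω, ξ t ω ∈ Ioo (0 : ℝ) 1)
    (hintlog : ∀ t, ∀ᵐ ω ∂P, ∃ m : ℤ, Real.logb 2 (ξ t ω) = m) {N₀ : ℝ} (hN₀ : 0 < N₀) {l₀ : ℤ}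
    (hl₀ : Real.logb 2 N₀ = l₀) {N : Ω → ℕ → ℝ} (hN : ∀ ω, N ω 0 = N₀)
    (hrec : ∀ ω t, N ω (t + 1) = if N ω t < K then 2 * N ω t else ξ t ω * N ω t) :
    ∀ᵐ ω ∂P, ∀ t, N ω t = 2 ^ level ⌈Real.logb 2 K⌉ l₀ (fun t => ⌈-Real.logb 2 (ξ t ω)⌉₊) t := by
  have hθ : ∀ l : ℤ, K ≤ (2 : ℝ) ^ l ↔ ⌈Real.logb 2 K⌉ ≤ l := fun l => by
    rw [← Real.rpow_intCast, ← Real.logb_le_iff_le_rpow one_lt_two hK, Int.ceil_le]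
  filter_upwards [ae_all_iff.2 hintlog] with ω hω
  refine eq_two_zpow_level hθ (fun t => eq_two_zpow_neg_natCeil (hval t ω) (hω t).choose_spec)
    ?_ (hrec ω)
  rw [hN, ← Real.rpow_intCast, ← hl₀, Real.rpow_logb two_pos (by norm_num) hN₀]

theorem tendsto_measure_lt_level_natCeil_neg_logb [IsProbabilityMeasure P] {ξ : ℕ → Ω → ℝ}
    (hmeas : ∀ t, Measurable (ξ t)) (hind : iIndepFun ξ P)
    (hident : ∀ t, IdentDistrib (ξ t) (ξ 0) P P) (hval : ∀ t ω, ξ t ω ∈ Ioo (0 : ℝ) 1)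
    (hE : ¬ Integrable (fun ω => Real.logb 2 (ξ 0 ω)) P) (θ l₀ x : ℤ) :
    Tendsto (fun t => P {ω | x < level θ l₀ (fun t => ⌈-Real.logb 2 (ξ t ω)⌉₊) t}) atTop
      (𝓝 0) := by
  have hlog : Measurable fun x : ℝ => Real.logb 2 x := Real.measurable_log.div_const _
  have hφ : Measurable fun x : ℝ => ⌈-Real.logb 2 x⌉₊ := Nat.measurable_ceil.comp hlog.neg
  have hneg : ∀ t ω, Real.logb 2 (ξ t ω) < 0 := fun t ω =>
    Real.logb_neg one_lt_two (hval t ω).1 (hval t ω).2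
  exact tendsto_measure_lt_level (fun t ω => Nat.ceil_pos.2 (neg_pos.2 (hneg t ω)))
    (fun t => hφ.comp (hmeas t)) (hind.comp _ fun _ => hφ) (fun t => (hident t).comp hφ)
    (lintegral_natCeil_neg_eq_top (hlog.comp (hmeas 0)) (fun ω => (hneg 0 ω).le) hE) x

end Model

end CrashModel

open CrashModel

/-- the geometric-growth-with-random-crashes model. If the crash sizes
satisfy `E[log₂ ξ(1)] = −∞` (equivalently, `log₂ ξ(1)` is not integrable, as
`ξ(t) ∈ (0,1)`), then `N(t) → 0` in probability, yet the event
`{lim_{t→∞} N(t) = 0}` has probability zero. -/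
theorem crash_model_null_recurrence
    {Ω : Type} [MeasurableSpace Ω]
    (Pm : Measure Ω) [IsProbabilityMeasure Pm]
    (K : ℝ) (hK : 0 < K)
    (ξ : ℕ → Ω → ℝ)
    (hmeas : ∀ t, Measurable (ξ t))
    (hindep : iIndepFun ξ Pm)
    (hident : ∀ t, Pm.map (ξ t) = Pm.map (ξ 0))
    (hval : ∀ t ω, ξ t ω ∈ Set.Ioo (0:ℝ) 1)
    (hintlog : ∀ t, ∀ᵐ ω ∂Pm, ∃ m : ℤ, Real.logb 2 (ξ t ω) = (m : ℝ))
    (N0 : ℝ) (hN0pos : 0 < N0) (hN0 : ∃ m : ℤ, Real.logb 2 N0 = (m : ℝ))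
    (N : Ω → ℕ → ℝ)
    (hN0' : ∀ ω, N ω 0 = N0)
    (hNrec : ∀ ω t, N ω (t+1) = if N ω t < K then 2 * N ω t else ξ t ω * N ω t)
    (hE : ¬ Integrable (fun ω => Real.logb 2 (ξ 0 ω)) Pm) :
    (∀ x : ℤ, Tendsto (fun t => Pm {ω | (x : ℝ) < Real.logb 2 (N ω t)}) atTop (nhds 0)) ∧
    Pm {ω | Tendsto (fun t => N ω t) atTop (nhds 0)} = 0 := by
  obtain ⟨l₀, hl₀⟩ := hN0
  have hlevel := ae_eq_two_zpow_level hK hval hintlog hN0pos hl₀ hN0' hNrec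
  refine ⟨fun x => ?_, measure_mono_null (fun ω => not_tendsto_zero_of_doubling hK
    (fun t => (hval t ω).1) (hN0' ω ▸ hN0pos) (hNrec ω)) measure_empty⟩
  refine (tendsto_measure_lt_level_natCeil_neg_logb hmeas hindep
    (fun t => ⟨(hmeas t).aemeasurable, (hmeas 0).aemeasurable, hident t⟩) hval hE
    ⌈Real.logb 2 K⌉ l₀ x).congr fun t => measure_congr ?_
  filter_upwards [hlevel] with ω hω
  change (x < _) = ((x : ℝ) < Real.logb 2 (N ω t))
  rw [hω t, ← Real.rpow_intCast, Real.logb_rpow two_pos (by norm_num)]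
  norm_cast
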